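/- Let λ ∈ (0,1]. A function μ : [0,∞) → [0,λ) is an MT(λ)-function if and only if for every nonincreasing sequence {x_n} in [0,∞), sup_n μ(x_n) < λ. -/

import Mathlib

open Filter Set Topology

/-- `MTfun φ`: φ is an MT-function, i.e. `limsup_{s→t⁺} φ(s) < 1` for all `t ≥ 0`. -/
def MTfun (φ : ℝ → ℝ) : Prop :=
  ∀ t : ℝ, 0 ≤ t → Filter.limsup φ (nhdsWithin t (Set.Ioi t)) < 1

/-- `MTlfun λ μ`: μ is an MT(λ)-function, i.e. `limsup_{s→t⁺} μ(s) < λ` for all `t ≥ 0`. -/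
def MTlfun (l : ℝ) (μ : ℝ → ℝ) : Prop :=
  ∀ t : ℝ, 0 ≤ t → Filter.limsup μ (nhdsWithin t (Set.Ioi t)) < l

/-!
(⇒) A nonincreasing sequence `x` in `[0, ∞)` converges to `t = inf x` from the right or is
eventually equal to `t`. Either way, the MT(λ) condition at `t` together with `μ t < λ` bounds
`μ (x n)` eventually by some `c < λ`, and the finitely many remaining terms are each `< λ`.

(⇐) If `limsup_{s→t⁺} μ s ≥ λ`, points `s > t` with `μ s > λ - 1/(n+1)` occur arbitrarily close
to `t`; choosing them one below the other gives a decreasing sequence along which `sup μ = λ`.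
-/

theorem ciSup_lt_of_eventually_cofinite_le {ι β : Type*} [Nonempty ι]
    [ConditionallyCompleteLinearOrder β] {f : ι → β} {c l : β}
    (hf : ∀ i, f i < l) (hc : c < l) (hev : ∀ᶠ i in cofinite, f i ≤ c) : ⨆ i, f i < l := by
  obtain ⟨j, hj⟩ := exists_upper_bound_image {i | ¬f i ≤ c} f (eventually_cofinite.mp hev)
  have hbound : ∀ i, f i ≤ max c (f j) := fun i =>
    if h : f i ≤ c then le_max_of_le_left h else le_max_of_le_right (hj i h)
  exact (ciSup_le hbound).trans_lt (max_lt hc (hf j))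

theorem exists_lt_eventually_nhdsGE_le_of_limsup_nhdsGT_lt {α β : Type*} [TopologicalSpace α]
    [PartialOrder α] [ConditionallyCompleteLinearOrder β] [DenselyOrdered β] {f : α → β}
    {t : α} {l : β} (hbdd : IsBoundedUnder (· ≤ ·) (𝓝[>] t) f)
    (hlim : limsup f (𝓝[>] t) < l) (ht : f t < l) :
    ∃ c < l, ∀ᶠ s in 𝓝[≥] t, f s ≤ c := by
  obtain ⟨c, hlc, hcl⟩ := exists_between hlim
  refine ⟨max c (f t), max_lt hcl ht, ?_⟩
  rw [← Ioi_insert, nhdsWithin_insert, eventually_sup, eventually_pure]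
  exact ⟨le_max_right _ _,
    (eventually_lt_of_limsup_lt hlc hbdd).mono fun s hs => le_max_of_le_left hs.le⟩

theorem exists_strictAnti_of_frequently_nhdsGT {α : Type*} [TopologicalSpace α] [LinearOrder α]
    [ClosedIciTopology α] [NoMaxOrder α] {t : α} {p : ℕ → α → Prop}
    (h : ∀ n, ∃ᶠ s in 𝓝[>] t, p n s) :
    ∃ x : ℕ → α, StrictAnti x ∧ (∀ n, t < x n) ∧ ∀ n, p n (x n) := by
  have step : ∀ n b, t < b → ∃ s, p n s ∧ s ∈ Ioo t b := fun n b hb =>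
    ((h n).and_eventually (Ioo_mem_nhdsGT hb)).exists
  choose! f hfp hf using step
  obtain ⟨b, hb⟩ := exists_gt t
  -- `y n` is the upper bound below which the `n`-th point is chosen
  let y : ℕ → α := fun n => Nat.rec b (fun n s => f n s) n
  have hy : ∀ n, t < y n := fun n => by
    induction n with
    | zero => exact hb
    | succ n ih => exact (hf n (y n) ih).1
  refine ⟨fun n => f n (y n), strictAnti_nat_of_succ_lt fun n => ?_,
    fun n => (hf n (y n) (hy n)).1, fun n => hfp n (y n) (hy n)⟩
  exact (hf (n + 1) (y (n + 1)) (hy (n + 1))).2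

section MTlfun

variable {l : ℝ} {μ : ℝ → ℝ}

theorem MTlfun.iSup_lt_of_antitone (hM : MTlfun l μ) (hμ : ∀ t, 0 ≤ t → μ t < l)
    {x : ℕ → ℝ} (hx0 : ∀ n, 0 ≤ x n) (hx : Antitone x) : ⨆ n, μ (x n) < l := by
  set t := ⨅ n, x n
  have hbdd : BddBelow (range x) := ⟨0, forall_mem_range.2 hx0⟩
  have ht0 : 0 ≤ t := le_ciInf hx0
  have htend : Tendsto x atTop (𝓝[≥] t) :=
    tendsto_nhdsWithin_iff.2 ⟨tendsto_atTop_ciInf hx hbdd, .of_forall (ciInf_le hbdd)⟩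
  have hμbdd : IsBoundedUnder (· ≤ ·) (𝓝[>] t) μ := isBoundedUnder_of_eventually_le
    (eventually_nhdsWithin_of_forall fun s hs => (hμ s (ht0.trans (le_of_lt hs))).le)
  obtain ⟨c, hcl, hc⟩ :=
    exists_lt_eventually_nhdsGE_le_of_limsup_nhdsGT_lt hμbdd (hM t ht0) (hμ t ht0)
  exact ciSup_lt_of_eventually_cofinite_le (fun n => hμ _ (hx0 n)) hcl
    (Nat.cofinite_eq_atTop ▸ htend.eventually hc)

theorem MTlfun_of_forall_antitone (hμ : ∀ t, 0 ≤ t → 0 ≤ μ t ∧ μ t < l)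
    (h : ∀ x : ℕ → ℝ, (∀ n, 0 ≤ x n) → Antitone x → ⨆ n, μ (x n) < l) : MTlfun l μ := by
  intro t ht0
  by_contra! hlim
  have hcob : IsCoboundedUnder (· ≤ ·) (𝓝[>] t) μ :=
    IsBoundedUnder.isCoboundedUnder_le <| isBoundedUnder_of_eventually_ge <|
      eventually_nhdsWithin_of_forall fun s hs => (hμ s (ht0.trans (le_of_lt hs))).1
  have hfreq : ∀ n : ℕ, ∃ᶠ s in 𝓝[>] t, l - 1 / (n + 1) < μ s := fun n =>
    frequently_lt_of_lt_limsup hcob (by linarith [show (0 : ℝ) < 1 / (n + 1) by positivity])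
  obtain ⟨x, hanti, htx, hlarge⟩ := exists_strictAnti_of_frequently_nhdsGT hfreq
  have hx0 : ∀ n, 0 ≤ x n := fun n => ht0.trans (htx n).le
  have hbdd : BddAbove (range fun n => μ (x n)) :=
    ⟨l, forall_mem_range.2 fun n => (hμ _ (hx0 n)).2.le⟩
  refine (h x hx0 hanti.antitone).not_ge (le_of_forall_pos_lt_add fun ε hε => ?_)
  obtain ⟨n, hn⟩ := exists_nat_one_div_lt hε
  calc l < μ (x n) + 1 / (n + 1) := by linarith [hlarge n]
    _ ≤ (⨆ m, μ (x m)) + ε := add_le_add (le_ciSup hbdd n) hn.le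

end MTlfun

theorem stmt_15_general (l : ℝ) (μ : ℝ → ℝ)
    (hmap : ∀ t : ℝ, 0 ≤ t → 0 ≤ μ t ∧ μ t < l) :
    MTlfun l μ ↔ ∀ x : ℕ → ℝ, (∀ n, 0 ≤ x n) → (∀ n, x (n + 1) ≤ x n) →
      (⨆ n, μ (x n)) < l :=
  ⟨fun hM _ hx0 hx => hM.iSup_lt_of_antitone (fun t ht => (hmap t ht).2) hx0
      (antitone_nat_of_succ_le hx),
    fun h => MTlfun_of_forall_antitone hmap fun x hx0 hx => h x hx0 fun n => hx n.le_succ⟩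

theorem stmt_15 (l : ℝ) (hl : 0 < l ∧ l ≤ 1) (μ : ℝ → ℝ)
    (hmap : ∀ t : ℝ, 0 ≤ t → 0 ≤ μ t ∧ μ t < l) :
    MTlfun l μ ↔ ∀ x : ℕ → ℝ, (∀ n, 0 ≤ x n) → (∀ n, x (n + 1) ≤ x n) →
      (⨆ n, μ (x n)) < l :=
  stmt_15_general l μ hmap
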